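/- arXiv:2310.07200 — 2 statements merged into one kernel-verified Lean document; each statement's English description precedes it below -/
import Mathlib

section
/- Let S[n,l] = (1/√M)·∑_{m=0}^{M−1} X[n,m]·e^{j2πml/M} and suppose the received samples for a single path are R[n,l] = β·e^{j2πk(n(M+M_CP)+l)/(NM)}·(1/√M)·∑_{m=0}^{M−1} X[n,m]·e^{j2π(m/M)(l − l_i + (n(M+M_CP)+l)/p)}, where p ≠ 0 and (l − l′ − l_i + (n(M+M_CP)+l)/p)/M is never an integer for l′ ∈ {0,…,M−1}. Then R[n,l] = ∑_{l′=0}^{M−1} h_n[l,l′]·S[n,l′] with h_n[l,l′] = β·e^{j2π((n(M+M_CP)+l)/M)·((k/N) + (M−1)/(2p))}·e^{jπ((M−1)/M)(l−l′−l_i)}·sin(π(l−l′−l_i+(n(M+M_CP)+l)/p)) / (M·sin((π/M)(l−l′−l_i+(n(M+M_CP)+l)/p))). -/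
/-!
The received sample is the trigonometric polynomial `θ ↦ ∑ m, X m e^{2πi mθ/M}` evaluated at the
fractional point `θ = l - l_i + (n(M+M_CP)+l)/p`, and `√M · S l'` are its values at the integers
`l' < M`. Orthogonality of the `M`-th roots of unity interpolates the value at `θ` from these
samples with the Dirichlet kernel `D(θ - l') = ∑ m, e^{2πi m(θ-l')/M}`, and `D` sums as a
geometric series to `e^{πi(M-1)(θ-l')/M} sin(π(θ-l')) / sin(π(θ-l')/M)`. Merging that linear phase
with the Doppler phase gives `h_n[l,l']`.
-/

open Real

open Complex (I)
open scoped Complex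
open Finset

theorem Complex.exp_ofReal_mul_I_sub_one (x : ℝ) :
    cexp (x * I) - 1 = 2 * I * (Real.sin (x / 2) : ℂ) * cexp ((x / 2 : ℝ) * I) := by
  have hsq : cexp (x * I) = cexp ((x / 2 : ℝ) * I) ^ 2 := by
    rw [← Complex.exp_nat_mul]; push_cast; ring_nf
  rw [hsq, Complex.exp_mul_I, ← Complex.ofReal_sin, ← Complex.ofReal_cos]
  have h : (Real.sin (x / 2) : ℂ) ^ 2 + (Real.cos (x / 2) : ℂ) ^ 2 = 1 := by
    exact_mod_cast Real.sin_sq_add_cos_sq (x / 2)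
  linear_combination h - (Real.sin (x / 2) : ℂ) ^ 2 * Complex.I_sq

theorem Complex.sum_range_exp_nat_mul_I (M : ℕ) {x : ℝ} (hx : Real.sin (x / 2) ≠ 0) :
    ∑ m ∈ range M, cexp (m * x * I) =
      cexp (((M - 1) * x / 2 : ℝ) * I) * ((Real.sin (M * x / 2) / Real.sin (x / 2) : ℝ) : ℂ) := by
  have hden : cexp (x * I) - 1 ≠ 0 := by
    rw [Complex.exp_ofReal_mul_I_sub_one]
    exact mul_ne_zero (mul_ne_zero (by simp) (by exact_mod_cast hx)) (Complex.exp_ne_zero _)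
  have hpow : ∀ m : ℕ, cexp (m * x * I) = cexp (x * I) ^ m := fun m => by
    rw [← Complex.exp_nat_mul]; ring_nf
  simp_rw [hpow]
  rw [geom_sum_eq (sub_ne_zero.mp hden), ← hpow, div_eq_iff hden,
    show (M : ℂ) * x = ((M * x : ℝ) : ℂ) by push_cast; ring,
    Complex.exp_ofReal_mul_I_sub_one, Complex.exp_ofReal_mul_I_sub_one]
  have hsplit : cexp ((M * x / 2 : ℝ) * I) =
      cexp (((M - 1) * x / 2 : ℝ) * I) * cexp ((x / 2 : ℝ) * I) := by
    rw [← Complex.exp_add]; push_cast; ring_nf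
  have hxC : (Real.sin (x / 2) : ℂ) ≠ 0 := by exact_mod_cast hx
  rw [hsplit]
  field_simp
  rw [Complex.ofReal_div, div_mul_cancel₀ _ hxC]

theorem IsPrimitiveRoot.sum_pow_mul_inv_pow {K : Type*} [Field K] {ζ : K} {M : ℕ}
    (hζ : IsPrimitiveRoot ζ M) {m m' : ℕ} (hm : m < M) (hm' : m' < M) :
    ∑ l ∈ range M, ζ ^ (m * l) * (ζ ^ (m' * l))⁻¹ = if m = m' then (M : K) else 0 := by
  have hζ0 : ζ ≠ 0 := hζ.ne_zero (by omega)
  have hterm : ∀ l, ζ ^ (m * l) * (ζ ^ (m' * l))⁻¹ = (ζ ^ m / ζ ^ m') ^ l := fun l => by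
    rw [div_pow, ← pow_mul, ← pow_mul, div_eq_mul_inv]
  simp_rw [hterm]
  split_ifs with h
  · subst h; simp [hζ0]
  · have hr : ζ ^ m / ζ ^ m' ≠ 1 := fun h1 =>
      h (hζ.pow_inj hm hm' ((div_eq_one_iff_eq (pow_ne_zero _ hζ0)).mp h1))
    rw [geom_sum_eq hr, div_pow, ← pow_mul, ← pow_mul, mul_comm m, mul_comm m', pow_mul, pow_mul,
      hζ.pow_eq_one]
    simp

theorem IsPrimitiveRoot.sum_mul_sum_inv_pow {K : Type*} [Field K] {ζ : K} {M : ℕ}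
    (hζ : IsPrimitiveRoot ζ M) (c X : ℕ → K) :
    ∑ l ∈ range M, (∑ m' ∈ range M, c m' * (ζ ^ (m' * l))⁻¹) * ∑ m ∈ range M, X m * ζ ^ (m * l)
      = M * ∑ m ∈ range M, X m * c m := by
  calc _ = ∑ l ∈ range M, ∑ m ∈ range M, ∑ m' ∈ range M,
        X m * c m' * (ζ ^ (m * l) * (ζ ^ (m' * l))⁻¹) :=
          sum_congr rfl fun l _ => by
            rw [mul_comm, sum_mul_sum]
            exact sum_congr rfl fun m _ => sum_congr rfl fun m' _ => by ring
    _ = ∑ m ∈ range M, ∑ m' ∈ range M,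
        X m * c m' * ∑ l ∈ range M, ζ ^ (m * l) * (ζ ^ (m' * l))⁻¹ := by
          rw [sum_comm]
          refine sum_congr rfl fun m _ => ?_
          rw [sum_comm]
          simp_rw [mul_sum]
    _ = M * ∑ m ∈ range M, X m * c m := by
          rw [mul_sum]
          refine sum_congr rfl fun m hm => ?_
          rw [sum_congr rfl fun m' hm' => by
            rw [hζ.sum_pow_mul_inv_pow (mem_range.mp hm) (mem_range.mp hm')]]
          simp [hm]
          ring

theorem sum_range_exp_two_pi_mul_div {M : ℕ} {θ : ℝ} (hθ : ¬∃ z : ℤ, θ / M = z) :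
    ∑ m ∈ range M, cexp ((2 * π * m * θ / M : ℝ) * I) =
      cexp ((π * (M - 1) * θ / M : ℝ) * I) *
        ((Real.sin (π * θ) / Real.sin (π / M * θ) : ℝ) : ℂ) := by
  have hM : (M : ℝ) ≠ 0 := fun h => hθ ⟨0, by simp [h]⟩
  have hsin : Real.sin (2 * π * θ / M / 2) ≠ 0 := by
    rw [Ne, Real.sin_eq_zero_iff]
    rintro ⟨z, hz⟩
    exact hθ ⟨z, by field_simp at hz ⊢; linarith⟩
  convert Complex.sum_range_exp_nat_mul_I M hsin using 3
  · push_cast; ring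
  · congr 2; ring
  · congr 2 <;> field_simp

theorem dirichlet_interpolation (M : ℕ) (a : ℝ) (X : ℕ → ℂ) :
    ∑ l ∈ range M, (∑ m ∈ range M, cexp ((2 * π * m * (a - l) / M : ℝ) * I)) *
        ∑ m ∈ range M, X m * cexp ((2 * π * m * l / M : ℝ) * I)
      = M * ∑ m ∈ range M, X m * cexp ((2 * π * m * a / M : ℝ) * I) := by
  rcases Nat.eq_zero_or_pos M with rfl | hM
  · simp
  have hζ := Complex.isPrimitiveRoot_exp M hM.ne'
  have hpow : ∀ m l : ℕ,
      cexp ((2 * π * m * l / M : ℝ) * I) = cexp (2 * π * I / M) ^ (m * l) := fun m l => by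
    rw [← Complex.exp_nat_mul]; push_cast; ring_nf
  have hshift : ∀ m l : ℕ, cexp ((2 * π * m * (a - l) / M : ℝ) * I) =
      cexp ((2 * π * m * a / M : ℝ) * I) * (cexp (2 * π * I / M) ^ (m * l))⁻¹ := fun m l => by
    rw [← hpow, ← Complex.exp_neg, ← Complex.exp_add]; push_cast; ring_nf
  simp_rw [hshift, hpow]
  exact hζ.sum_mul_sum_inv_pow _ X

theorem otfs_input_output_relation_general (M N M_CP l_i n l : ℕ) (hM : 1 ≤ M)
    (β : ℂ) (k p : ℝ)
    (X S : ℕ → ℂ) (R : ℂ)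
    (hS : ∀ l₀, S l₀ = ((1 / Real.sqrt M : ℝ) : ℂ) *
      ∑ m ∈ Finset.range M, X m *
        Complex.exp (((2 * π * (m : ℝ) * (l₀ : ℝ) / M : ℝ) : ℂ) * Complex.I))
    (hnonint : ∀ l' < M, ¬ ∃ z : ℤ,
      (((l : ℝ) - l' - l_i + ((n : ℝ) * ((M : ℝ) + M_CP) + l) / p) / M) = (z : ℝ))
    (hR : R = β *
      Complex.exp (((2 * π * k * ((n : ℝ) * ((M : ℝ) + M_CP) + l) / (N * M) : ℝ) : ℂ) * Complex.I) *
      ((1 / Real.sqrt M : ℝ) : ℂ) *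
      ∑ m ∈ Finset.range M, X m *
        Complex.exp (((2 * π * ((m : ℝ) / M) *
          ((l : ℝ) - l_i + ((n : ℝ) * ((M : ℝ) + M_CP) + l) / p) : ℝ) : ℂ) * Complex.I)) :
    R = ∑ l' ∈ Finset.range M,
      (β *
        Complex.exp (((2 * π * (((n : ℝ) * ((M : ℝ) + M_CP) + l) / M) *
          (k / N + ((M : ℝ) - 1) / (2 * p)) : ℝ) : ℂ) * Complex.I) *
        Complex.exp (((π * (((M : ℝ) - 1) / M) * ((l : ℝ) - l' - l_i) : ℝ) : ℂ) * Complex.I) *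
        ((Real.sin (π * ((l : ℝ) - l' - l_i + ((n : ℝ) * ((M : ℝ) + M_CP) + l) / p)) /
          (M * Real.sin (π / M * ((l : ℝ) - l' - l_i + ((n : ℝ) * ((M : ℝ) + M_CP) + l) / p))) : ℝ) : ℂ))
      * S l' := by
  set T : ℝ := (n : ℝ) * ((M : ℝ) + M_CP) + l
  set a : ℝ := (l : ℝ) - l_i + T / p
  have hM0 : (0 : ℝ) < M := by exact_mod_cast hM
  have hsqrt : ((1 / √M : ℝ) : ℂ) * (√M : ℝ) = 1 := by
    rw [← Complex.ofReal_mul, one_div_mul_cancel (Real.sqrt_pos.mpr hM0).ne', Complex.ofReal_one]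
  have hsamples : ∀ l' : ℕ, ∑ m ∈ range M, X m * cexp ((2 * π * m * l' / M : ℝ) * I) =
      (√M : ℝ) * S l' := fun l' => by
    rw [hS, ← mul_assoc, mul_comm _ ((1 / √M : ℝ) : ℂ), hsqrt, one_mul]
  have hinterp : ∑ m ∈ range M, X m * cexp ((2 * π * (m / M) * a : ℝ) * I) =
      (M : ℂ)⁻¹ * ∑ l' ∈ range M, (∑ m ∈ range M, cexp ((2 * π * m * (a - l') / M : ℝ) * I)) *
        ((√M : ℝ) * S l') := by
    simp_rw [← hsamples, dirichlet_interpolation, ← mul_assoc]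
    rw [inv_mul_cancel₀ (by exact_mod_cast hM0.ne'), one_mul]
    exact sum_congr rfl fun m _ => by ring_nf
  rw [hR, hinterp, mul_sum, mul_sum]
  refine sum_congr rfl fun l' hl' => ?_
  rw [show a - l' = l - l' - l_i + T / p by ring,
    sum_range_exp_two_pi_mul_div (hnonint l' (mem_range.mp hl'))]
  have hphase : cexp ((2 * π * k * T / (N * M) : ℝ) * I) *
      cexp ((π * (M - 1) * (l - l' - l_i + T / p) / M : ℝ) * I) =
      cexp ((2 * π * (T / M) * (k / N + ((M : ℝ) - 1) / (2 * p)) : ℝ) * I) *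
      cexp ((π * (((M : ℝ) - 1) / M) * ((l : ℝ) - l' - l_i) : ℝ) * I) := by
    rw [← Complex.exp_add, ← Complex.exp_add]; push_cast; ring_nf
  calc _ = β * (cexp ((2 * π * k * T / (N * M) : ℝ) * I) *
        cexp ((π * (M - 1) * (l - l' - l_i + T / p) / M : ℝ) * I)) *
        ((Real.sin (π * (l - l' - l_i + T / p)) /
          Real.sin (π / M * (l - l' - l_i + T / p)) : ℝ) : ℂ) / M *
        (((1 / √M : ℝ) : ℂ) * (√M : ℝ)) * S l' := by ring
    _ = _ := by rw [hphase, hsqrt]; push_cast; ring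

/-- Core computational identity of Theorem 1: the input-output relation of
CP-OFDM-based OTFS with Doppler squint, for a single path. -/
theorem otfs_input_output_relation (M N M_CP l_i n l : ℕ) (hM : 1 ≤ M) (hN : 1 ≤ N)
    (β : ℂ) (k p : ℝ) (hp : p ≠ 0)
    (X S : ℕ → ℂ) (R : ℂ)
    (hS : ∀ l₀, S l₀ = ((1 / Real.sqrt M : ℝ) : ℂ) *
      ∑ m ∈ Finset.range M, X m *
        Complex.exp (((2 * π * (m : ℝ) * (l₀ : ℝ) / M : ℝ) : ℂ) * Complex.I))
    (hnonint : ∀ l' < M, ¬ ∃ z : ℤ,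
      (((l : ℝ) - l' - l_i + ((n : ℝ) * ((M : ℝ) + M_CP) + l) / p) / M) = (z : ℝ))
    (hR : R = β *
      Complex.exp (((2 * π * k * ((n : ℝ) * ((M : ℝ) + M_CP) + l) / (N * M) : ℝ) : ℂ) * Complex.I) *
      ((1 / Real.sqrt M : ℝ) : ℂ) *
      ∑ m ∈ Finset.range M, X m *
        Complex.exp (((2 * π * ((m : ℝ) / M) *
          ((l : ℝ) - l_i + ((n : ℝ) * ((M : ℝ) + M_CP) + l) / p) : ℝ) : ℂ) * Complex.I)) :
    R = ∑ l' ∈ Finset.range M,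
      (β *
        Complex.exp (((2 * π * (((n : ℝ) * ((M : ℝ) + M_CP) + l) / M) *
          (k / N + ((M : ℝ) - 1) / (2 * p)) : ℝ) : ℂ) * Complex.I) *
        Complex.exp (((π * (((M : ℝ) - 1) / M) * ((l : ℝ) - l' - l_i) : ℝ) : ℂ) * Complex.I) *
        ((Real.sin (π * ((l : ℝ) - l' - l_i + ((n : ℝ) * ((M : ℝ) + M_CP) + l) / p)) /
          (M * Real.sin (π / M * ((l : ℝ) - l' - l_i + ((n : ℝ) * ((M : ℝ) + M_CP) + l) / p))) : ℝ) : ℂ))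
      * S l' :=
  otfs_input_output_relation_general M N M_CP l_i n l hM β k p X S R hS hnonint hR
end

section
/- Let M ≥ 1 and suppose for each l′ ∈ {0,…,M−1} the channel coefficient is h[l,l′] = β·φ(l)·[(l′+l_i) mod M = l] with |β| > 0, φ unimodular, and 1 ≤ l_i ≤ l_max < M. If S[l′] = x_p for l′ ∈ {q(l_max+1) : 0 ≤ q ≤ M_p−1} and 0 otherwise, then for every l' ∈ {1,…,l_max} with l' ≠ l_i and every q with q(l_max+1)+l' ≤ M−1 − l_max, the received sample R[q(l_max+1)+l'] = ∑_{l′} h[q(l_max+1)+l', l′]·S[l′] = 0, while |R[q(l_max+1)+l_i]| = |β|·|x_p| whenever q(l_max+1)+l_i ≤ M−1. -/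
open Finset

/-! The pilots sit at the multiples `q (l_max + 1)`, `q < M_p`, so each occupies its own block of
length `l_max + 1` inside the frame. The channel shifts every pilot by the delay `l_i ≤ l_max`, which
keeps it inside its block: there is no wrap-around modulo `M`, and the received energy lies exactly at
the positions of residue `l_i` modulo `l_max + 1`, one pilot per position. -/

lemma mul_add_lt_of_lt_div {q n c M : ℕ} (hq : q < M / n) (hc : c < n) : q * n + c < M := by
  have hblock := (Nat.le_div_iff_mul_le (by omega)).mp hq
  rw [Nat.succ_mul] at hblock
  omega

lemma eq_and_eq_of_mul_add_eq_mul_add {q q' n c c' : ℕ} (hc : c < n) (hc' : c' < n)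
    (h : q * n + c = q' * n + c') : q = q' ∧ c = c' := by
  have hcc' : c = c' := by
    rw [← Nat.mul_add_mod_of_lt (a := q) hc, h, Nat.mul_add_mod_of_lt hc']
  subst hcc'
  exact ⟨Nat.eq_of_mul_eq_mul_right (by omega) (Nat.add_right_cancel h), rfl⟩

lemma sum_range_mul_ite_exists_mul {α : Type*} [NonUnitalNonAssocSemiring α] {n K M : ℕ}
    (hn : 0 < n) (hK : K * n ≤ M) (f : ℕ → α) (x : α) :
    ∑ l ∈ range M, f l * (if ∃ q, q < K ∧ l = q * n then x else 0) =
      ∑ q ∈ range K, f (q * n) * x := by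
  classical
  have hcomb : ∀ l, (∃ q, q < K ∧ l = q * n) ↔ l ∈ (range K).image (· * n) := fun l => by
    simp only [mem_image, mem_range]
    exact exists_congr fun q => and_congr_right' eq_comm
  have hsub : (range K).image (· * n) ⊆ range M := by
    intro l hl
    obtain ⟨q, hq, rfl⟩ := mem_image.mp hl
    exact mem_range.mpr (lt_of_lt_of_le (Nat.mul_lt_mul_of_pos_right (mem_range.mp hq) hn) hK)
  simp only [hcomb, mul_ite, mul_zero]
  rw [sum_ite_mem, inter_eq_right.mpr hsub,
    sum_image fun a _ b _ hab => Nat.eq_of_mul_eq_mul_right hn hab]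

lemma received_eq_sum_shifted_pilots {M l_max l_i M_p : ℕ} {x_p β : ℂ} {φ : ℕ → ℂ}
    {S : ℕ → ℂ} {h : ℕ → ℕ → ℂ} {R : ℕ → ℂ} (hlim : l_i ≤ l_max)
    (hMp : M_p = M / (l_max + 1))
    (hS : ∀ l', S l' = if ∃ q, q < M_p ∧ l' = q * (l_max + 1) then x_p else 0)
    (hh : ∀ l l', h l l' = if (l' + l_i) % M = l then β * φ l else 0)
    (hR : ∀ l, R l = ∑ l' ∈ Finset.range M, h l l' * S l') (l : ℕ) :
    R l = ∑ q ∈ range M_p, if q * (l_max + 1) + l_i = l then β * φ l * x_p else 0 := by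
  simp only [hR, hS]
  rw [sum_range_mul_ite_exists_mul (Nat.succ_pos l_max) (hMp ▸ Nat.div_mul_le_self M _)]
  refine sum_congr rfl fun q hq => ?_
  have hlt := mul_add_lt_of_lt_div (hMp ▸ mem_range.mp hq) (Nat.lt_succ_of_le hlim)
  rw [hh, Nat.mod_eq_of_lt hlt, ite_mul, zero_mul]

theorem delay_detection_correct_general (M l_max l_i M_p : ℕ) (x_p β : ℂ) (φ : ℕ → ℂ)
    (S : ℕ → ℂ) (h : ℕ → ℕ → ℂ) (R : ℕ → ℂ)
    (hlim : l_i ≤ l_max) (hlmax : l_max < M)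
    (hMp : M_p = M / (l_max + 1))
    (hφ : ∀ l, ‖φ l‖ = 1)
    (hS : ∀ l', S l' = if ∃ q, q < M_p ∧ l' = q * (l_max + 1) then x_p else 0)
    (hh : ∀ l l', h l l' = if (l' + l_i) % M = l then β * φ l else 0)
    (hR : ∀ l, R l = ∑ l' ∈ Finset.range M, h l l' * S l') :
    (∀ l' q, 1 ≤ l' → l' ≤ l_max → l' ≠ l_i →
      q * (l_max + 1) + l' ≤ M - 1 - l_max → R (q * (l_max + 1) + l') = 0) ∧
    (∀ q, q ≤ M_p - 1 → q * (l_max + 1) + l_i ≤ M - 1 →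
      ‖R (q * (l_max + 1) + l_i)‖ = ‖β‖ * ‖x_p‖) := by
  have hR' := received_eq_sum_shifted_pilots hlim hMp hS hh hR
  have hMp_pos : 0 < M_p := hMp ▸ Nat.div_pos hlmax (Nat.succ_pos l_max)
  refine ⟨fun l' q _ hl' hne _ => ?_, fun q hq _ => ?_⟩
  · rw [hR']
    refine sum_eq_zero fun q' _ => if_neg fun heq => hne ?_
    exact (eq_and_eq_of_mul_add_eq_mul_add (Nat.lt_succ_of_le hlim)
      (Nat.lt_succ_of_le hl') heq).2.symm
  · simp only [hR', add_left_inj, Nat.mul_left_inj (Nat.succ_ne_zero l_max), sum_ite_eq',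
      mem_range, if_pos (show q < M_p by omega), norm_mul, hφ, mul_one]

/-- Correctness of threshold-based delay detection in the noiseless, no-squint,
single-path case. -/
theorem delay_detection_correct (M l_max l_i M_p : ℕ) (x_p β : ℂ) (φ : ℕ → ℂ)
    (S : ℕ → ℂ) (h : ℕ → ℕ → ℂ) (R : ℕ → ℂ)
    (hM : 1 ≤ M) (hli : 1 ≤ l_i) (hlim : l_i ≤ l_max) (hlmax : l_max < M)
    (hMp : M_p = M / (l_max + 1))
    (hβ : 0 < ‖β‖)
    (hφ : ∀ l, ‖φ l‖ = 1)
    (hS : ∀ l', S l' = if ∃ q, q < M_p ∧ l' = q * (l_max + 1) then x_p else 0)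
    (hh : ∀ l l', h l l' = if (l' + l_i) % M = l then β * φ l else 0)
    (hR : ∀ l, R l = ∑ l' ∈ Finset.range M, h l l' * S l') :
    (∀ l' q, 1 ≤ l' → l' ≤ l_max → l' ≠ l_i →
      q * (l_max + 1) + l' ≤ M - 1 - l_max → R (q * (l_max + 1) + l') = 0) ∧
    (∀ q, q ≤ M_p - 1 → q * (l_max + 1) + l_i ≤ M - 1 →
      ‖R (q * (l_max + 1) + l_i)‖ = ‖β‖ * ‖x_p‖) :=
  delay_detection_correct_general M l_max l_i M_p x_p β φ S h R hlim hlmax hMp hφ hS hh hR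
end
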